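/- Let Ω ⊆ ℝⁿ be open and nonempty and let h : Ω → ℝ be continuous with at most linear growth, i.e. there is C > 0 with |h(y)| ≤ C(1 + ‖y‖) for all y ∈ Ω. Suppose h admits at least one affine minorant on Ω (so that conv_Ω(h) is not identically −∞). Then conv_Ω(h) is real-valued on the convex hull ⟨Ω⟩ and its restriction to Ω has at most linear growth: there is C' > 0 with |conv_Ω(h)(x)| ≤ C'(1 + ‖x‖) for all x ∈ Ω. -/
import Mathlib


open scoped RealInnerProductSpace

/-- The lower convex envelope of `f` relative to `Ω`, with values in `ℝ ∪ {−∞}` (`EReal`). -/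
noncomputable def convEnv {n : ℕ} (Ω : Set (EuclideanSpace ℝ (Fin n)))
    (f : EuclideanSpace ℝ (Fin n) → ℝ) (x : EuclideanSpace ℝ (Fin n)) : EReal :=
  sSup {z : EReal | ∃ (a : ℝ) (b : EuclideanSpace ℝ (Fin n)),
    (∀ y ∈ Ω, a + ⟪b, y⟫ ≤ f y) ∧ z = ((a + ⟪b, x⟫ : ℝ) : EReal)}

/-- Proposition 2, part 3. If `h` is continuous with at most linear
growth on the open nonempty set `Ω` and admits an affine minorant on `Ω`, then its lower
convex envelope relative to `Ω` is real-valued on the convex hull of `Ω` and has at most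
linear growth on `Ω`. -/
theorem convEnv_linear_growth (n : ℕ)
    (Ω : Set (EuclideanSpace ℝ (Fin n))) (hΩo : IsOpen Ω) (hΩne : Ω.Nonempty)
    (h : EuclideanSpace ℝ (Fin n) → ℝ) (hh : ContinuousOn h Ω)
    (C : ℝ) (hC : 0 < C) (hgrowth : ∀ y ∈ Ω, |h y| ≤ C * (1 + ‖y‖))
    (hminor : ∃ (a : ℝ) (b : EuclideanSpace ℝ (Fin n)), ∀ y ∈ Ω, a + ⟪b, y⟫ ≤ h y) :
    ∃ g : EuclideanSpace ℝ (Fin n) → ℝ,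
      (∀ x ∈ convexHull ℝ Ω, convEnv Ω h x = ((g x : ℝ) : EReal)) ∧
      ∃ C' > (0 : ℝ), ∀ x ∈ Ω, |g x| ≤ C' * (1 + ‖x‖) := by
  obtain ⟨a₀, b₀, hmin0⟩ := hminor
  -- every affine minorant lies below the envelope
  have hmem : ∀ (a : ℝ) (b : EuclideanSpace ℝ (Fin n)) (x : EuclideanSpace ℝ (Fin n)),
      (∀ y ∈ Ω, a + ⟪b, y⟫ ≤ h y) → ((a + ⟪b, x⟫ : ℝ) : EReal) ≤ convEnv Ω h x := by
    intro a b x hab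
    exact le_sSup ⟨a, b, hab, rfl⟩
  -- on the convex hull, minorants are uniformly bounded at each point
  have hS : ∀ x ∈ convexHull ℝ Ω, ∃ M : ℝ, ∀ (a : ℝ) (b : EuclideanSpace ℝ (Fin n)),
      (∀ y ∈ Ω, a + ⟪b, y⟫ ≤ h y) → a + ⟪b, x⟫ ≤ M := by
    have hconv : Convex ℝ {x : EuclideanSpace ℝ (Fin n) |
        ∃ M : ℝ, ∀ (a : ℝ) (b : EuclideanSpace ℝ (Fin n)),
        (∀ y ∈ Ω, a + ⟪b, y⟫ ≤ h y) → a + ⟪b, x⟫ ≤ M} := by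
      intro u hu v hv s t hs ht hst
      obtain ⟨Mu, hMu⟩ := hu
      obtain ⟨Mv, hMv⟩ := hv
      refine ⟨s * Mu + t * Mv, ?_⟩
      intro a b hab
      have h1 := hMu a b hab
      have h2 := hMv a b hab
      have hinner : ⟪b, s • u + t • v⟫ = s * ⟪b, u⟫ + t * ⟪b, v⟫ := by
        rw [inner_add_right, real_inner_smul_right, real_inner_smul_right]
      have ha : s * a + t * a = a := by rw [← add_mul, hst, one_mul]
      have h1' := mul_le_mul_of_nonneg_left h1 hs
      have h2' := mul_le_mul_of_nonneg_left h2 ht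
      simp only [Set.mem_setOf_eq, hinner]
      nlinarith
    have hsub : Ω ⊆ {x : EuclideanSpace ℝ (Fin n) |
        ∃ M : ℝ, ∀ (a : ℝ) (b : EuclideanSpace ℝ (Fin n)),
        (∀ y ∈ Ω, a + ⟪b, y⟫ ≤ h y) → a + ⟪b, x⟫ ≤ M} := by
      intro x hx
      exact ⟨h x, fun a b hab => hab x hx⟩
    intro x hx
    exact convexHull_min hsub hconv hx
  refine ⟨fun x => (convEnv Ω h x).toReal, ?_, C + |a₀| + ‖b₀‖,
    by nlinarith [abs_nonneg a₀, norm_nonneg b₀], ?_⟩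
  · intro x hx
    obtain ⟨M, hM⟩ := hS x hx
    have hub : convEnv Ω h x ≤ ((M : ℝ) : EReal) := by
      apply sSup_le
      rintro z ⟨a, b, hab, rfl⟩
      exact_mod_cast hM a b hab
    have hlb := hmem a₀ b₀ x hmin0
    have hnt : convEnv Ω h x ≠ ⊤ := fun hT => by simp [hT] at hub
    have hnb : convEnv Ω h x ≠ ⊥ := fun hB => by simp [hB] at hlb
    exact (EReal.coe_toReal hnt hnb).symm
  · intro x hx
    obtain ⟨M, hM⟩ := hS x (subset_convexHull ℝ Ω hx)
    have hub : convEnv Ω h x ≤ ((h x : ℝ) : EReal) := by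
      apply sSup_le
      rintro z ⟨a, b, hab, rfl⟩
      exact_mod_cast hab x hx
    have hlb := hmem a₀ b₀ x hmin0
    have hnt : convEnv Ω h x ≠ ⊤ := fun hT => by simp [hT] at hub
    have hnb : convEnv Ω h x ≠ ⊥ := fun hB => by simp [hB] at hlb
    set gx := (convEnv Ω h x).toReal with hgx
    have heq : convEnv Ω h x = ((gx : ℝ) : EReal) := (EReal.coe_toReal hnt hnb).symm
    rw [heq] at hub hlb
    have hub' : gx ≤ h x := by exact_mod_cast hub
    have hlb' : a₀ + ⟪b₀, x⟫ ≤ gx := by exact_mod_cast hlb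
    have hgr := hgrowth x hx
    have hcs := abs_real_inner_le_norm b₀ x
    have habs := abs_le.mp hgr
    have hcs' := abs_le.mp hcs
    have ha₀ := abs_le.mp (le_refl |a₀|)
    rw [abs_le]
    constructor
    · nlinarith [norm_nonneg x, norm_nonneg b₀, abs_nonneg a₀, neg_abs_le a₀]
    · nlinarith [norm_nonneg x, norm_nonneg b₀, abs_nonneg a₀]
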